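/- arXiv:math/0303316 — 5 statements merged into one kernel-verified Lean document; each statement's English description precedes it below -/
import Mathlib

section
/- Suppose h0,h1,h2,h3 ∈ C[y1,...,yd] satisfy h0·h3 = h1·h2 and gcd(h0,h1,h2,h3) = 1, and not all hi are zero. Then there exist polynomials f1,f2,f3,f4 with gcd(f1,f2) = 1 and gcd(f3,f4) = 1 such that h0 = f2f3, h1 = f1f3, h2 = f2f4, h3 = f1f4. -/
/-! Writing `h₁ = f₃ f₁` as a product of a divisor of `h₀` and a divisor of `h₃` (Riesz
decomposition, available in any GCD domain) and cancelling it from `h₀ h₃ = h₁ h₂` produces the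
four factors. Each `fᵢ` divides two of the `hⱼ`, so a common divisor of `f₁, f₂` or of `f₃, f₄`
divides all four `hⱼ` and is therefore a unit. -/

/-- The four number theorem. -/
theorem exists_eq_mul_of_mul_eq_mul {α : Type*} [CommMonoidWithZero α]
    [IsCancelMulZero α] [DecompositionMonoid α] {a b c d : α} (h : a * b = c * d) :
    ∃ p q r s, a = p * q ∧ b = r * s ∧ c = p * r ∧ d = q * s := by
  obtain ⟨p, r, ⟨q, hq⟩, ⟨s, hs⟩, rfl⟩ := exists_dvd_and_dvd_of_dvd_mul (Dvd.intro d h.symm)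
  rcases eq_or_ne (p * r) 0 with hc | hc
  · rw [hc, zero_mul, mul_eq_zero] at h
    rcases h with rfl | rfl
    · exact ⟨0, d, b, 1, by simp, by simp, by simpa using hc, by simp⟩
    · exact ⟨a, 1, 0, d, by simp, by simp, by simpa using hc, by simp⟩
  · refine ⟨p, q, r, s, hq, hs, rfl, mul_left_cancel₀ hc ?_⟩
    rw [← h, hq, hs, mul_mul_mul_comm]

theorem quadric_universal_param_general (d : ℕ) (h0 h1 h2 h3 : MvPolynomial (Fin d) ℂ)
    (heq : h0 * h3 = h1 * h2)
    (hgcd : ∀ z : MvPolynomial (Fin d) ℂ, z ∣ h0 → z ∣ h1 → z ∣ h2 → z ∣ h3 → IsUnit z) :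
    ∃ f1 f2 f3 f4 : MvPolynomial (Fin d) ℂ,
      IsRelPrime f1 f2 ∧ IsRelPrime f3 f4 ∧
      h0 = f2 * f3 ∧ h1 = f1 * f3 ∧ h2 = f2 * f4 ∧ h3 = f1 * f4 := by
  obtain ⟨f3, f2, f1, f4, e0, e3, e1, e2⟩ := exists_eq_mul_of_mul_eq_mul heq
  refine ⟨f1, f2, f3, f4, ?_, ?_, e0.trans (mul_comm _ _), e1.trans (mul_comm _ _), e2, e3⟩
  · intro z hz1 hz2
    exact hgcd z (e0 ▸ hz2.mul_left _) (e1 ▸ hz1.mul_left _) (e2 ▸ hz2.mul_right _)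
      (e3 ▸ hz1.mul_right _)
  · intro z hz3 hz4
    exact hgcd z (e0 ▸ hz3.mul_right _) (e1 ▸ hz3.mul_right _) (e2 ▸ hz4.mul_left _)
      (e3 ▸ hz4.mul_left _)

/-- If h0h3 = h1h2, gcd(h0,h1,h2,h3) = 1 and not all hi are zero, then
there exist f1,f2,f3,f4 with gcd(f1,f2) = gcd(f3,f4) = 1 and
h0 = f2f3, h1 = f1f3, h2 = f2f4, h3 = f1f4. -/
theorem quadric_universal_param (d : ℕ) (h0 h1 h2 h3 : MvPolynomial (Fin d) ℂ)
    (heq : h0 * h3 = h1 * h2)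
    (hgcd : ∀ z : MvPolynomial (Fin d) ℂ, z ∣ h0 → z ∣ h1 → z ∣ h2 → z ∣ h3 → IsUnit z)
    (hne : ¬ (h0 = 0 ∧ h1 = 0 ∧ h2 = 0 ∧ h3 = 0)) :
    ∃ f1 f2 f3 f4 : MvPolynomial (Fin d) ℂ,
      IsRelPrime f1 f2 ∧ IsRelPrime f3 f4 ∧
      h0 = f2 * f3 ∧ h1 = f1 * f3 ∧ h2 = f2 * f4 ∧ h3 = f1 * f4 :=
  quadric_universal_param_general d h0 h1 h2 h3 heq hgcd
end

section
/- Suppose (f1,f2,f3,f4) and (g1,g2,g3,g4) are tuples of polynomials in C[y1,...,yd] with gcd(f1,f2) = gcd(f3,f4) = 1 and gcd(g1,g2) = gcd(g3,g4) = 1, and suppose f2f3 = g2g3, f1f3 = g1g3, f2f4 = g2g4, f1f4 = g1g4, with not all products zero. Then there exists λ ∈ C* such that g1 = λf1, g2 = λf2, g3 = λ^{-1}f3, g4 = λ^{-1}f4. -/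
/-!
Cancelling whichever of `f3`, `f4` is nonzero gives `f1 * g2 = f2 * g1`. As both `(f1, f2)`
and `(g1, g2)` are coprime, this forces `(g1, g2) = u • (f1, f2)` for a unit `u`, and units of
`ℂ[y₁, …, y_d]` are nonzero constants. Cancelling whichever of `f1`, `f2` is nonzero then gives
`(f3, f4) = u • (g3, g4)`.
-/

open MvPolynomial

section

variable {α : Type*} [CommMonoidWithZero α] [IsCancelMulZero α] [DecompositionMonoid α]

theorem IsRelPrime.exists_unit_of_mul_eq_mul {a b a' b' : α} (h : IsRelPrime a b)
    (h' : IsRelPrime a' b') (e : a * b' = b * a') : ∃ u : αˣ, a' = a * u ∧ b' = b * u := by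
  by_cases ha : a = 0
  · subst ha
    have hb : IsUnit b := isRelPrime_zero_left.mp h
    have ha' : a' = 0 := hb.mul_right_eq_zero.mp (by rw [← e, zero_mul])
    subst ha'
    have hb' : IsUnit b' := isRelPrime_zero_left.mp h'
    exact ⟨hb.unit⁻¹ * hb'.unit, (zero_mul _).symm,
      by rw [Units.val_mul, ← mul_assoc, hb.mul_val_inv, one_mul, IsUnit.unit_spec]⟩
  · have hab' : a ∣ a' := h.dvd_of_dvd_mul_left ⟨b', e.symm⟩
    have ha'b : a' ∣ a := h'.dvd_of_dvd_mul_left ⟨b, by rw [mul_comm, e, mul_comm]⟩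
    obtain ⟨u, hu⟩ := associated_of_dvd_dvd hab' ha'b
    refine ⟨u, hu.symm, mul_left_cancel₀ ha ?_⟩
    rw [e, ← hu, mul_left_comm]

theorem exists_unit_of_outer_product_eq [Nontrivial α] {f1 f2 f3 f4 g1 g2 g3 g4 : α}
    (hf12 : IsRelPrime f1 f2) (hg12 : IsRelPrime g1 g2)
    (e0 : f2 * f3 = g2 * g3) (e1 : f1 * f3 = g1 * g3)
    (e2 : f2 * f4 = g2 * g4) (e3 : f1 * f4 = g1 * g4) (h34 : f3 ≠ 0 ∨ f4 ≠ 0) :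
    ∃ u : αˣ, g1 = f1 * u ∧ g2 = f2 * u ∧ f3 = u * g3 ∧ f4 = u * g4 := by
  have cross : f1 * g2 = f2 * g1 := by
    rcases h34 with h3 | h4
    · refine mul_right_cancel₀ h3 ?_
      rw [mul_right_comm, e1, mul_right_comm f2, e0]
      ac_rfl
    · refine mul_right_cancel₀ h4 ?_
      rw [mul_right_comm, e3, mul_right_comm f2, e2]
      ac_rfl
  obtain ⟨u, rfl, rfl⟩ := hf12.exists_unit_of_mul_eq_mul hg12 cross
  have cancel (x y : α) (h1 : f1 * x = f1 * u * y) (h2 : f2 * x = f2 * u * y) : x = u * y := by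
    rcases hf12.ne_zero_or_ne_zero with h | h
    · exact mul_left_cancel₀ h (by rw [h1, mul_assoc])
    · exact mul_left_cancel₀ h (by rw [h2, mul_assoc])
  exact ⟨u, rfl, rfl, cancel _ _ e1 e0, cancel _ _ e3 e2⟩

end

theorem quadric_param_uniqueness_general (d : ℕ)
    (f1 f2 f3 f4 g1 g2 g3 g4 : MvPolynomial (Fin d) ℂ)
    (hf12 : IsRelPrime f1 f2)
    (hg12 : IsRelPrime g1 g2)
    (e0 : f2 * f3 = g2 * g3) (e1 : f1 * f3 = g1 * g3)
    (e2 : f2 * f4 = g2 * g4) (e3 : f1 * f4 = g1 * g4)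
    (hne : ¬ (f2 * f3 = 0 ∧ f1 * f3 = 0 ∧ f2 * f4 = 0 ∧ f1 * f4 = 0)) :
    ∃ l : ℂˣ, g1 = C (l : ℂ) * f1 ∧ g2 = C (l : ℂ) * f2 ∧
      g3 = C ((l : ℂ)⁻¹) * f3 ∧ g4 = C ((l : ℂ)⁻¹) * f4 := by
  have h34 : f3 ≠ 0 ∨ f4 ≠ 0 := by
    contrapose! hne
    simp [hne]
  obtain ⟨u, rfl, rfl, rfl, rfl⟩ := exists_unit_of_outer_product_eq hf12 hg12 e0 e1 e2 e3 h34
  obtain ⟨r, hr, hu⟩ := isUnit_iff_eq_C_of_isReduced.mp u.isUnit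
  have hinv : C r⁻¹ * (u : MvPolynomial (Fin d) ℂ) = 1 := by
    rw [hu, ← C_mul, inv_mul_cancel₀ hr.ne_zero, C_1]
  refine ⟨hr.unit, ?_, ?_, ?_, ?_⟩ <;> rw [IsUnit.unit_spec]
  · rw [hu, mul_comm]
  · rw [hu, mul_comm]
  · rw [← mul_assoc, hinv, one_mul]
  · rw [← mul_assoc, hinv, one_mul]

/-- Uniqueness of the factorization for the quadric: two Σ-irreducible
tuples giving the same products differ by (λ,λ,λ⁻¹,λ⁻¹). -/
theorem quadric_param_uniqueness (d : ℕ)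
    (f1 f2 f3 f4 g1 g2 g3 g4 : MvPolynomial (Fin d) ℂ)
    (hf12 : IsRelPrime f1 f2) (hf34 : IsRelPrime f3 f4)
    (hg12 : IsRelPrime g1 g2) (hg34 : IsRelPrime g3 g4)
    (e0 : f2 * f3 = g2 * g3) (e1 : f1 * f3 = g1 * g3)
    (e2 : f2 * f4 = g2 * g4) (e3 : f1 * f4 = g1 * g4)
    (hne : ¬ (f2 * f3 = 0 ∧ f1 * f3 = 0 ∧ f2 * f4 = 0 ∧ f1 * f4 = 0)) :
    ∃ l : ℂˣ, g1 = C (l : ℂ) * f1 ∧ g2 = C (l : ℂ) * f2 ∧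
      g3 = C ((l : ℂ)⁻¹) * f3 ∧ g4 = C ((l : ℂ)⁻¹) * f4 :=
  quadric_param_uniqueness_general d f1 f2 f3 f4 g1 g2 g3 g4 hf12 hg12 e0 e1 e2 e3 hne
end

section
/- If f1,f2,f3 ∈ C[y1,...,yd] satisfy gcd(f1,f2,f3) = 1 and are not all zero, then the polynomials h0 = f1²+f2²+f3², h1 = f1f2, h2 = f2f3, h3 = f3f1 satisfy h1²h2² + h2²h3² + h3²h1² = h0h1h2h3 and gcd(h0,h1,h2,h3) = 1. -/
open MvPolynomial

/-- If gcd(f1,f2,f3) = 1 and not all are zero, then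
h0 = f1²+f2²+f3², h1 = f1f2, h2 = f2f3, h3 = f3f1 satisfy the Steiner relation and
gcd(h0,h1,h2,h3) = 1. -/
theorem steiner_param_of_irreducible (d : ℕ) (f1 f2 f3 : MvPolynomial (Fin d) ℂ)
    (hgcd : ∀ z : MvPolynomial (Fin d) ℂ, z ∣ f1 → z ∣ f2 → z ∣ f3 → IsUnit z)
    (hne : ¬ (f1 = 0 ∧ f2 = 0 ∧ f3 = 0)) :
    ((f1*f2)^2 * (f2*f3)^2 + (f2*f3)^2 * (f3*f1)^2 + (f3*f1)^2 * (f1*f2)^2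
      = (f1^2 + f2^2 + f3^2) * (f1*f2) * (f2*f3) * (f3*f1)) ∧
    (∀ z : MvPolynomial (Fin d) ℂ,
      z ∣ f1^2 + f2^2 + f3^2 → z ∣ f1*f2 → z ∣ f2*f3 → z ∣ f3*f1 → IsUnit z) := by
  refine ⟨by ring, ?_⟩
  intro z hz0 hz1 hz2 hz3
  by_contra hu
  have hz_ne : z ≠ 0 := by
    rintro rfl
    have e1 : f1 * f2 = 0 := zero_dvd_iff.mp hz1
    have e2 : f2 * f3 = 0 := zero_dvd_iff.mp hz2
    have e3 : f3 * f1 = 0 := zero_dvd_iff.mp hz3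
    have e0 : f1 ^ 2 + f2 ^ 2 + f3 ^ 2 = 0 := zero_dvd_iff.mp hz0
    apply hne
    rcases mul_eq_zero.mp e1 with h1 | h2
    · rcases mul_eq_zero.mp e2 with h2 | h3
      · have : f3 ^ 2 = 0 := by rw [h1, h2] at e0; simpa using e0
        exact ⟨h1, h2, by simpa using pow_eq_zero_iff (n := 2) two_ne_zero |>.mp this⟩
      · have : f2 ^ 2 = 0 := by rw [h1, h3] at e0; simpa using e0
        exact ⟨h1, pow_eq_zero_iff (n := 2) two_ne_zero |>.mp this, h3⟩
    · rcases mul_eq_zero.mp e3 with h3 | h1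
      · have : f1 ^ 2 = 0 := by rw [h2, h3] at e0; simpa using e0
        exact ⟨pow_eq_zero_iff (n := 2) two_ne_zero |>.mp this, h2, h3⟩
      · have : f3 ^ 2 = 0 := by rw [h1, h2] at e0; simpa using e0
        exact ⟨h1, h2, by simpa using pow_eq_zero_iff (n := 2) two_ne_zero |>.mp this⟩
  obtain ⟨p, hpirr, hpdvd⟩ := WfDvdMonoid.exists_irreducible_factor hu hz_ne
  have hp : Prime p := UniqueFactorizationMonoid.irreducible_iff_prime.mp hpirr
  have d0 : p ∣ f1 ^ 2 + f2 ^ 2 + f3 ^ 2 := hpdvd.trans hz0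
  have d1 : p ∣ f1 * f2 := hpdvd.trans hz1
  have d2 : p ∣ f2 * f3 := hpdvd.trans hz2
  have d3 : p ∣ f3 * f1 := hpdvd.trans hz3
  have key : p ∣ f1 ∧ p ∣ f2 ∧ p ∣ f3 := by
    rcases hp.dvd_or_dvd d1 with h1 | h2
    · rcases hp.dvd_or_dvd d2 with h2 | h3
      · refine ⟨h1, h2, hp.dvd_of_dvd_pow (n := 2) ?_⟩
        have : f3 ^ 2 = (f1 ^ 2 + f2 ^ 2 + f3 ^ 2) - f1 * f1 - f2 * f2 := by ring
        rw [this]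
        exact dvd_sub (dvd_sub d0 (h1.mul_right _)) (h2.mul_right _)
      · refine ⟨h1, hp.dvd_of_dvd_pow (n := 2) ?_, h3⟩
        have : f2 ^ 2 = (f1 ^ 2 + f2 ^ 2 + f3 ^ 2) - f1 * f1 - f3 * f3 := by ring
        rw [this]
        exact dvd_sub (dvd_sub d0 (h1.mul_right _)) (h3.mul_right _)
    · have h3 : p ∣ f3 := by
        rcases hp.dvd_or_dvd d3 with h3 | h1
        · exact h3
        · exact hp.dvd_of_dvd_pow (n := 2) (by
            have : f3 ^ 2 = (f1 ^ 2 + f2 ^ 2 + f3 ^ 2) - f1 * f1 - f2 * f2 := by ring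
            rw [this]
            exact dvd_sub (dvd_sub d0 (h1.mul_right _)) (h2.mul_right _))
      refine ⟨hp.dvd_of_dvd_pow (n := 2) ?_, h2, h3⟩
      have : f1 ^ 2 = (f1 ^ 2 + f2 ^ 2 + f3 ^ 2) - f2 * f2 - f3 * f3 := by ring
      rw [this]
      exact dvd_sub (dvd_sub d0 (h2.mul_right _)) (h3.mul_right _)
  exact hp.not_unit (hgcd p key.1 key.2.1 key.2.2)
end

section
/- Suppose (f1,f2,f3) and (g1,g2,g3) are tuples of polynomials in C[y1,...,yd] with gcd(f1,f2,f3) = gcd(g1,g2,g3) = 1, f1f2f3 ≠ 0, and suppose f1²+f2²+f3² = g1²+g2²+g3², f1f2 = g1g2, f2f3 = g2g3, f3f1 = g3g1. Then (g1,g2,g3) = ±(f1,f2,f3). -/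
open MvPolynomial

/-- Uniqueness for the Steiner parametrization: the tuple (f1,f2,f3)
is unique up to sign. -/
theorem steiner_param_uniqueness (d : ℕ)
    (f1 f2 f3 g1 g2 g3 : MvPolynomial (Fin d) ℂ)
    (hf : ∀ z : MvPolynomial (Fin d) ℂ, z ∣ f1 → z ∣ f2 → z ∣ f3 → IsUnit z)
    (hg : ∀ z : MvPolynomial (Fin d) ℂ, z ∣ g1 → z ∣ g2 → z ∣ g3 → IsUnit z)
    (hne : f1 * f2 * f3 ≠ 0)
    (e0 : f1^2 + f2^2 + f3^2 = g1^2 + g2^2 + g3^2)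
    (e1 : f1 * f2 = g1 * g2) (e2 : f2 * f3 = g2 * g3) (e3 : f3 * f1 = g3 * g1) :
    (g1 = f1 ∧ g2 = f2 ∧ g3 = f3) ∨ (g1 = -f1 ∧ g2 = -f2 ∧ g3 = -f3) := by
  have h12 : f1 * f2 ≠ 0 := fun h => hne (by rw [h, zero_mul])
  have h23 : f2 * f3 ≠ 0 := by
    intro h
    apply hne
    have : f1 * (f2 * f3) = 0 := by rw [h, mul_zero]
    linear_combination this
  have h31 : f3 * f1 ≠ 0 := by
    intro h
    apply hne
    have : f2 * (f3 * f1) = 0 := by rw [h, mul_zero]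
    linear_combination this
  have two_ne : (2 : MvPolynomial (Fin d) ℂ) ≠ 0 := two_ne_zero
  have sq1 : g1 ^ 2 = f1 ^ 2 := by
    have key : g1 ^ 2 * (f2 * f3) = f1 ^ 2 * (f2 * f3) := by
      calc g1 ^ 2 * (f2 * f3) = g1 ^ 2 * (g2 * g3) := by rw [e2]
        _ = (g1 * g2) * (g3 * g1) := by ring
        _ = (f1 * f2) * (f3 * f1) := by rw [e1, e3]
        _ = f1 ^ 2 * (f2 * f3) := by ring
    exact mul_right_cancel₀ h23 key
  have sq2 : g2 ^ 2 = f2 ^ 2 := by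
    have key : g2 ^ 2 * (f3 * f1) = f2 ^ 2 * (f3 * f1) := by
      calc g2 ^ 2 * (f3 * f1) = g2 ^ 2 * (g3 * g1) := by rw [e3]
        _ = (g1 * g2) * (g2 * g3) := by ring
        _ = (f1 * f2) * (f2 * f3) := by rw [e1, e2]
        _ = f2 ^ 2 * (f3 * f1) := by ring
    exact mul_right_cancel₀ h31 key
  have sq3 : g3 ^ 2 = f3 ^ 2 := by
    have key : g3 ^ 2 * (f1 * f2) = f3 ^ 2 * (f1 * f2) := by
      calc g3 ^ 2 * (f1 * f2) = g3 ^ 2 * (g1 * g2) := by rw [e1]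
        _ = (g2 * g3) * (g3 * g1) := by ring
        _ = (f2 * f3) * (f3 * f1) := by rw [e2, e3]
        _ = f3 ^ 2 * (f1 * f2) := by ring
    exact mul_right_cancel₀ h12 key
  have c1 : g1 = f1 ∨ g1 = -f1 := by
    have : (g1 - f1) * (g1 + f1) = 0 := by linear_combination sq1
    rcases mul_eq_zero.mp this with h | h
    · exact Or.inl (by linear_combination h)
    · exact Or.inr (by linear_combination h)
  have c2 : g2 = f2 ∨ g2 = -f2 := by
    have : (g2 - f2) * (g2 + f2) = 0 := by linear_combination sq2
    rcases mul_eq_zero.mp this with h | h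
    · exact Or.inl (by linear_combination h)
    · exact Or.inr (by linear_combination h)
  have c3 : g3 = f3 ∨ g3 = -f3 := by
    have : (g3 - f3) * (g3 + f3) = 0 := by linear_combination sq3
    rcases mul_eq_zero.mp this with h | h
    · exact Or.inl (by linear_combination h)
    · exact Or.inr (by linear_combination h)
  rcases c1 with h1 | h1 <;> rcases c2 with h2 | h2 <;> rcases c3 with h3 | h3
  · exact Or.inl ⟨h1, h2, h3⟩
  · -- g1 = f1, g2 = f2, g3 = -f3 : contradiction from e2
    exfalso
    apply h23
    have h2' : (2 : MvPolynomial (Fin d) ℂ) * (f2 * f3) = 0 := by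
      rw [h2, h3] at e2; linear_combination e2
    exact (mul_eq_zero.mp h2').resolve_left two_ne
  · exfalso
    apply h12
    have h2' : (2 : MvPolynomial (Fin d) ℂ) * (f1 * f2) = 0 := by
      rw [h1, h2] at e1; linear_combination e1
    exact (mul_eq_zero.mp h2').resolve_left two_ne
  · exfalso
    apply h12
    have h2' : (2 : MvPolynomial (Fin d) ℂ) * (f1 * f2) = 0 := by
      rw [h1, h2] at e1; linear_combination e1
    exact (mul_eq_zero.mp h2').resolve_left two_ne
  · exfalso
    apply h12
    have h2' : (2 : MvPolynomial (Fin d) ℂ) * (f1 * f2) = 0 := by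
      rw [h1, h2] at e1; linear_combination e1
    exact (mul_eq_zero.mp h2').resolve_left two_ne
  · exfalso
    apply h12
    have h2' : (2 : MvPolynomial (Fin d) ℂ) * (f1 * f2) = 0 := by
      rw [h1, h2] at e1; linear_combination e1
    exact (mul_eq_zero.mp h2').resolve_left two_ne
  · exfalso
    apply h23
    have h2' : (2 : MvPolynomial (Fin d) ℂ) * (f2 * f3) = 0 := by
      rw [h2, h3] at e2; linear_combination e2
    exact (mul_eq_zero.mp h2').resolve_left two_ne
  · exact Or.inr ⟨h1, h2, h3⟩
end

section
/- Suppose (f1,f2,f3,f4) and (g1,g2,g3,g4) in C[u,v]^4 satisfy gcd(f1,f3) = gcd(f2,f4) = 1, gcd(g1,g3) = gcd(g2,g4) = 1, f2f3f4 ≠ 0, and f1 = g1, f2²f3 = g2²g3, f2f3f4 = g2g3g4, f3f4² = g3g4². Then there exists λ ∈ C* with g1 = f1, g2 = λf2, g3 = λ^{-2}f3, g4 = λf4. -/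
open MvPolynomial

/-- Units of `MvPolynomial (Fin 2) ℂ` are constants. -/
lemma mv_unit_is_C (p : MvPolynomial (Fin 2) ℂ) (h : IsUnit p) :
    ∃ c : ℂ, p = C c := by
  have h1 : IsUnit (MvPolynomial.finSuccEquiv ℂ 1 p) := h.map _
  obtain ⟨r, hr, hrp⟩ := Polynomial.isUnit_iff.mp h1
  have h0 : IsUnit (MvPolynomial.finSuccEquiv ℂ 0 r) := hr.map _
  obtain ⟨s, hs, hsr⟩ := Polynomial.isUnit_iff.mp h0
  set c : ℂ := MvPolynomial.constantCoeff s with hc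
  have hsC : s = C c := MvPolynomial.eq_C_of_isEmpty s
  have hback0 : (MvPolynomial.finSuccEquiv ℂ 0).symm (Polynomial.C (C c)) = C c :=
    RingHom.congr_fun (MvPolynomial.finSuccEquiv_comp_C_eq_C 0) c
  have hrC : r = C c := by
    have : (MvPolynomial.finSuccEquiv ℂ 0).symm ((MvPolynomial.finSuccEquiv ℂ 0) r)
        = (MvPolynomial.finSuccEquiv ℂ 0).symm (Polynomial.C (C c)) := by
      rw [← hsr, hsC]
    simpa [hback0] using this
  have hback1 : (MvPolynomial.finSuccEquiv ℂ 1).symm (Polynomial.C (C c)) = C c :=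
    RingHom.congr_fun (MvPolynomial.finSuccEquiv_comp_C_eq_C 1) c
  refine ⟨c, ?_⟩
  have : (MvPolynomial.finSuccEquiv ℂ 1).symm ((MvPolynomial.finSuccEquiv ℂ 1) p)
      = (MvPolynomial.finSuccEquiv ℂ 1).symm (Polynomial.C (C c)) := by
    rw [← hrp, hrC]
  simpa [hback1] using this

/-- Uniqueness for the universal parametrization
P = (x1, x2²x3, x2x3x4, x3x4²) of the singular quadric cone:
two Σ-irreducible tuples with the same products differ by (1, λ, λ⁻², λ). -/
theorem singular_quadric_uniqueness
    (f1 f2 f3 f4 g1 g2 g3 g4 : MvPolynomial (Fin 2) ℂ)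
    (hf13 : IsRelPrime f1 f3) (hf24 : IsRelPrime f2 f4)
    (hg13 : IsRelPrime g1 g3) (hg24 : IsRelPrime g2 g4)
    (hne : f2 * f3 * f4 ≠ 0)
    (e0 : f1 = g1) (e1 : f2^2 * f3 = g2^2 * g3)
    (e2 : f2 * f3 * f4 = g2 * g3 * g4) (e3 : f3 * f4^2 = g3 * g4^2) :
    ∃ l : ℂˣ, g1 = f1 ∧ g2 = C (l : ℂ) * f2 ∧
      g3 = C (((l : ℂ)^2)⁻¹) * f3 ∧ g4 = C (l : ℂ) * f4 := by
  have hf2 : f2 ≠ 0 := fun h => hne (by rw [h]; ring)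
  have hf3 : f3 ≠ 0 := fun h => hne (by rw [h]; ring)
  have hf4 : f4 ≠ 0 := fun h => hne (by rw [h]; ring)
  have hg234 : g2 * g3 * g4 ≠ 0 := e2 ▸ hne
  have hg2 : g2 ≠ 0 := fun h => hg234 (by rw [h]; ring)
  have hg3 : g3 ≠ 0 := fun h => hg234 (by rw [h]; ring)
  have hg4 : g4 ≠ 0 := fun h => hg234 (by rw [h]; ring)
  -- key cross relation
  have key : f2 * g4 = g2 * f4 := by
    have hnz : f2 * f3 * g2 * g3 ≠ 0 :=
      mul_ne_zero (mul_ne_zero (mul_ne_zero hf2 hf3) hg2) hg3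
    apply mul_left_cancel₀ hnz
    calc (f2 * f3 * g2 * g3) * (f2 * g4) = (f2^2 * f3) * (g2 * g3 * g4) := by ring
      _ = (g2^2 * g3) * (f2 * f3 * f4) := by rw [e1, ← e2]
      _ = (f2 * f3 * g2 * g3) * (g2 * f4) := by ring
  have d1 : f2 ∣ g2 := by
    refine hf24.dvd_of_dvd_mul_right ?_
    rw [← key]; exact dvd_mul_right _ _
  have d2 : g2 ∣ f2 := by
    refine hg24.dvd_of_dvd_mul_right ?_
    rw [key]; exact dvd_mul_right _ _
  obtain ⟨u, hu⟩ := associated_of_dvd_dvd d1 d2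
  obtain ⟨c, hcC⟩ := mv_unit_is_C u u.isUnit
  have hg2eq : g2 = C c * f2 := by rw [← hu, hcC]; ring
  have hc0 : c ≠ 0 := by
    intro h
    apply hg2
    rw [hg2eq, h, map_zero, zero_mul]
  refine ⟨Units.mk0 c hc0, e0.symm, ?_, ?_, ?_⟩
  · simpa using hg2eq
  · -- g3 = C (c^2)⁻¹ * f3
    have hf3eq : f3 = C (c^2) * g3 := by
      apply mul_left_cancel₀ (pow_ne_zero 2 hf2)
      calc f2^2 * f3 = g2^2 * g3 := e1
        _ = (C c * f2)^2 * g3 := by rw [hg2eq]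
        _ = f2^2 * (C (c^2) * g3) := by rw [map_pow]; ring
    have : C ((c^2)⁻¹) * f3 = g3 := by
      rw [hf3eq, ← mul_assoc, ← map_mul, inv_mul_cancel₀ (pow_ne_zero 2 hc0), map_one, one_mul]
    simpa using this.symm
  · -- g4 = C c * f4
    have h4 : f2 * g4 = f2 * (C c * f4) := by
      rw [key, hg2eq]; ring
    simpa using mul_left_cancel₀ hf2 h4
end
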